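/- Let k be a density kernel with rectangular support F × G, and suppose there is κ ≥ 1 with k(s₁,t₁)k(s₂,t₂) ≤ κ² k(s₂,t₁)k(s₁,t₂) for all s₁, s₂ ∈ F and t₁, t₂ ∈ G. Let u, v : S → [0, ∞) be bounded measurable functions with u(t) > 0 for every t ∈ G and sup{v(t)/u(t) : t ∈ G} < ∞, and define u₁(s) = ∫_S k(s,t) u(t) λ(dt) and v₁(s) = ∫_S k(s,t) v(t) λ(dt). Then osc_F(v₁/u₁) ≤ ((κ − 1)/(κ + 1)) · osc_G(v/u), where for a real function w and a set E, osc_E(w) = sup{w(t₁) − w(t₂) : t₁, t₂ ∈ E}. -/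

import Mathlib

open MeasureTheory
open scoped NNReal ENNReal

/-- The oscillation of `w` over a set `E`: `sup {w t₁ - w t₂ : t₁, t₂ ∈ E}`. -/
noncomputable def oscOn {S : Type*} (w : S → ℝ) (E : Set S) : ℝ :=
  sSup {d : ℝ | ∃ t₁ ∈ E, ∃ t₂ ∈ E, d = w t₁ - w t₂}

/-!
Fix `s₁, s₂ ∈ F`, let `U_i = ∫ k(s_i, ·) u` and `r = v / u`, with values in `[m, M]` on `G`.
For every constant `c`, `U₁ U₂ (v₁/u₁ (s₁) - v₁/u₁ (s₂)) = ∫ (U₂ k(s₁, ·) - U₁ k(s₂, ·)) (v - c u)`,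
and on `G` the integrand is `U₁ k(s₂, ·) u · (ρ - 1)(r - c)` with `ρ = k(s₁, ·) U₂ / (k(s₂, ·) U₁)`.
The cross-ratio bound confines `ρ` to an interval `[a, κ² a]`, and a suitable `c` makes
`(ρ - 1)(r - c) ≤ (κ - 1)/(κ + 1) · (M - m)` on that box: the worst case is `a = 1/κ`,
which is where the factor `(κ - 1)/(κ + 1)` comes from.
-/

section Oscillation

variable {α : Type*} {w : α → ℝ} {E : Set α}

lemma oscOn_le_of_forall_sub_le {B : ℝ} (hB : 0 ≤ B)
    (h : ∀ t₁ ∈ E, ∀ t₂ ∈ E, w t₁ - w t₂ ≤ B) : oscOn w E ≤ B :=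
  Real.sSup_le (by rintro d ⟨t₁, ht₁, t₂, ht₂, rfl⟩; exact h t₁ ht₁ t₂ ht₂) hB

lemma exists_bounds_sub_le_oscOn (hE : E.Nonempty) (hA : BddAbove (w '' E))
    (hB : BddBelow (w '' E)) :
    ∃ m M, (∀ t ∈ E, w t ∈ Set.Icc m M) ∧ M - m ≤ oscOn w E := by
  have hne : (w '' E).Nonempty := hE.image w
  have hosc : BddAbove {d : ℝ | ∃ t₁ ∈ E, ∃ t₂ ∈ E, d = w t₁ - w t₂} := by
    obtain ⟨M, hM⟩ := hA
    obtain ⟨m, hm⟩ := hB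
    refine ⟨M - m, ?_⟩
    rintro d ⟨t₁, ht₁, t₂, ht₂, rfl⟩
    exact sub_le_sub (hM ⟨t₁, ht₁, rfl⟩) (hm ⟨t₂, ht₂, rfl⟩)
  refine ⟨sInf (w '' E), sSup (w '' E),
    fun t ht => ⟨csInf_le hB ⟨t, ht, rfl⟩, le_csSup hA ⟨t, ht, rfl⟩⟩, ?_⟩
  have hsup : sSup (w '' E) ≤ oscOn w E + sInf (w '' E) := by
    refine csSup_le hne ?_
    rintro _ ⟨t₁, ht₁, rfl⟩
    have : w t₁ - oscOn w E ≤ sInf (w '' E) := by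
      refine le_csInf hne ?_
      rintro _ ⟨t₂, ht₂, rfl⟩
      have : w t₁ - w t₂ ≤ oscOn w E := le_csSup hosc ⟨t₁, ht₁, t₂, ht₂, rfl⟩
      linarith
    linarith
  linarith

end Oscillation

lemma mul_sub_le_of_mem_Icc {a b m M s δ h r : ℝ} (hs : s ∈ Set.Icc (0 : ℝ) 1)
    (hb : (b - 1) * (1 - s) ≤ δ) (ha : (1 - a) * s ≤ δ)
    (hh : h ∈ Set.Icc a b) (hr : r ∈ Set.Icc m M) :
    (h - 1) * (r - (m + s * (M - m))) ≤ δ * (M - m) := by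
  obtain ⟨hs0, hs1⟩ := hs
  obtain ⟨hah, hhb⟩ := hh
  obtain ⟨hmr, hrM⟩ := hr
  have hMm : 0 ≤ M - m := by linarith
  rcases le_total 1 h with h1 | h1
  · nlinarith [mul_le_mul_of_nonneg_left hrM (sub_nonneg.2 h1),
      mul_nonneg (mul_nonneg (sub_nonneg.2 hhb) (sub_nonneg.2 hs1)) hMm,
      mul_nonneg (sub_nonneg.2 hb) hMm]
  · nlinarith [mul_le_mul_of_nonneg_left hmr (sub_nonneg.2 h1),
      mul_nonneg (mul_nonneg (sub_nonneg.2 hah) hs0) hMm,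
      mul_nonneg (sub_nonneg.2 ha) hMm]

lemma exists_mem_Icc_mul_le_of_one_le {κ a : ℝ} (hκ : 1 ≤ κ) (ha : 0 < a) :
    ∃ s ∈ Set.Icc (0 : ℝ) 1,
      (κ ^ 2 * a - 1) * (1 - s) ≤ (κ - 1) / (κ + 1) ∧ (1 - a) * s ≤ (κ - 1) / (κ + 1) := by
  set δ := (κ - 1) / (κ + 1) with hδ
  have hδ0 : 0 ≤ δ := div_nonneg (by linarith) (by linarith)
  rcases le_or_gt (1 - a) δ with h1 | h1
  · exact ⟨1, ⟨zero_le_one, le_rfl⟩, by rwa [sub_self, mul_zero], by rwa [mul_one]⟩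
  · have h1a : 0 < 1 - a := hδ0.trans_lt h1
    refine ⟨δ / (1 - a), ⟨div_nonneg hδ0 h1a.le, (div_le_one h1a).2 h1.le⟩, ?_,
      by rw [mul_div_cancel₀ _ h1a.ne']⟩
    have hs : (1 - δ / (1 - a)) * (1 - a) = 1 - a - δ := by field_simp
    have hδκ : δ * (κ ^ 2 * a - a) = (κ - 1) ^ 2 * a := by
      rw [hδ]; field_simp; ring
    -- after clearing `1 - a`, the inequality is `0 ≤ (κ a - 1)²`
    rw [← mul_le_mul_iff_of_pos_right h1a, mul_assoc, hs]
    nlinarith [sq_nonneg (κ * a - 1)]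

theorem exists_center_mul_sub_le {κ a m M : ℝ} (hκ : 1 ≤ κ) (ha : 0 < a) :
    ∃ c, ∀ h ∈ Set.Icc a (κ ^ 2 * a), ∀ r ∈ Set.Icc m M,
      (h - 1) * (r - c) ≤ (κ - 1) / (κ + 1) * (M - m) := by
  obtain ⟨s, hs, hb, ha'⟩ := exists_mem_Icc_mul_le_of_one_le hκ ha
  exact ⟨m + s * (M - m), fun h hh r hr => mul_sub_le_of_mem_Icc hs hb ha' hh hr⟩

lemma exists_pos_forall_mem_Icc_of_le_mul {α : Type*} {f : α → ℝ} {E : Set α} {K : ℝ}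
    (hK : 0 < K) (hE : E.Nonempty) (hf : ∀ t ∈ E, 0 < f t)
    (hfK : ∀ t ∈ E, ∀ t' ∈ E, f t ≤ K * f t') :
    ∃ a, 0 < a ∧ ∀ t ∈ E, f t ∈ Set.Icc a (K * a) := by
  have hbdd : BddBelow (f '' E) := ⟨0, by rintro _ ⟨t, ht, rfl⟩; exact (hf t ht).le⟩
  have hupper : ∀ t ∈ E, f t ≤ K * sInf (f '' E) := by
    intro t ht
    rw [← div_le_iff₀' hK]
    refine le_csInf (hE.image f) ?_
    rintro _ ⟨t', ht', rfl⟩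
    rw [div_le_iff₀' hK]
    exact hfK t ht t' ht'
  obtain ⟨t₀, ht₀⟩ := hE
  refine ⟨sInf (f '' E), ?_, fun t ht => ⟨csInf_le hbdd ⟨t, ht, rfl⟩, hupper t ht⟩⟩
  exact pos_of_mul_pos_right ((hf t₀ ht₀).trans_le (hupper t₀ ht₀)) hK.le

section Integral

variable {α : Type*} [MeasurableSpace α] {μ : Measure α}

lemma div_sub_div_integral_le {f₁ f₂ g₁ g₂ : α → ℝ} (hf₁ : Integrable f₁ μ)
    (hf₂ : Integrable f₂ μ) (hg₁ : Integrable g₁ μ) (hg₂ : Integrable g₂ μ)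
    (hG₁ : 0 < ∫ t, g₁ t ∂μ) (hG₂ : 0 < ∫ t, g₂ t ∂μ) {c D : ℝ}
    (h : ∀ t, (∫ t, g₂ t ∂μ) * f₁ t - (∫ t, g₁ t ∂μ) * f₂ t
      - c * ((∫ t, g₂ t ∂μ) * g₁ t - (∫ t, g₁ t ∂μ) * g₂ t) ≤ D * (∫ t, g₁ t ∂μ) * g₂ t) :
    (∫ t, f₁ t ∂μ) / (∫ t, g₁ t ∂μ) - (∫ t, f₂ t ∂μ) / (∫ t, g₂ t ∂μ) ≤ D := by
  set G₁ := ∫ t, g₁ t ∂μ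
  set G₂ := ∫ t, g₂ t ∂μ
  have hmono := integral_mono (by fun_prop) (by fun_prop) h
  rw [integral_sub (by fun_prop) (by fun_prop), integral_sub (by fun_prop) (by fun_prop),
    integral_const_mul, integral_const_mul, integral_const_mul,
    integral_sub (by fun_prop) (by fun_prop), integral_const_mul, integral_const_mul,
    integral_const_mul] at hmono
  rw [div_sub_div _ _ hG₁.ne' hG₂.ne', div_le_iff₀ (mul_pos hG₁ hG₂)]
  linarith

lemma integral_pos_of_pos_on {f : α → ℝ} (hf : 0 ≤ f) (hfi : Integrable f μ) {G : Set α}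
    (hG : 0 < μ G) (hpos : ∀ t ∈ G, 0 < f t) : 0 < ∫ t, f t ∂μ :=
  (integral_pos_iff_support_of_nonneg hf hfi).2
    (hG.trans_le (measure_mono fun t ht => (hpos t ht).ne'))

theorem div_sub_div_integral_le_of_cross_ratio {k₁ k₂ u v : α → ℝ} {G : Set α} {κ m M : ℝ}
    (hκ : 1 ≤ κ) (hG : G.Nonempty) (hk₁ : ∀ t ∈ G, 0 < k₁ t) (hk₂ : ∀ t ∈ G, 0 < k₂ t)
    (hk₁G : ∀ t ∉ G, k₁ t = 0) (hk₂G : ∀ t ∉ G, k₂ t = 0)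
    (hcross : ∀ t ∈ G, ∀ t' ∈ G, k₁ t * k₂ t' ≤ κ ^ 2 * (k₂ t * k₁ t'))
    (hu : ∀ t ∈ G, 0 < u t) (hr : ∀ t ∈ G, v t / u t ∈ Set.Icc m M)
    (h₁u : Integrable (fun t => k₁ t * u t) μ) (h₂u : Integrable (fun t => k₂ t * u t) μ)
    (h₁v : Integrable (fun t => k₁ t * v t) μ) (h₂v : Integrable (fun t => k₂ t * v t) μ)
    (hU₁ : 0 < ∫ t, k₁ t * u t ∂μ) (hU₂ : 0 < ∫ t, k₂ t * u t ∂μ) :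
    (∫ t, k₁ t * v t ∂μ) / (∫ t, k₁ t * u t ∂μ) - (∫ t, k₂ t * v t ∂μ) / (∫ t, k₂ t * u t ∂μ)
      ≤ (κ - 1) / (κ + 1) * (M - m) := by
  set U₁ := ∫ t, k₁ t * u t ∂μ
  set U₂ := ∫ t, k₂ t * u t ∂μ
  set ρ : α → ℝ := fun t => k₁ t / k₂ t * (U₂ / U₁)
  have hρ_pos : ∀ t ∈ G, 0 < ρ t := fun t ht =>
    mul_pos (div_pos (hk₁ t ht) (hk₂ t ht)) (div_pos hU₂ hU₁)
  have hρ_cross : ∀ t ∈ G, ∀ t' ∈ G, ρ t ≤ κ ^ 2 * ρ t' := by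
    intro t ht t' ht'
    have : k₁ t / k₂ t ≤ κ ^ 2 * (k₁ t' / k₂ t') := by
      rw [← mul_div_assoc, div_le_div_iff₀ (hk₂ t ht) (hk₂ t' ht')]
      linarith [hcross t ht t' ht']
    calc ρ t ≤ κ ^ 2 * (k₁ t' / k₂ t') * (U₂ / U₁) :=
          mul_le_mul_of_nonneg_right this (div_pos hU₂ hU₁).le
      _ = κ ^ 2 * ρ t' := mul_assoc _ _ _
  obtain ⟨a, ha, hρ⟩ :=
    exists_pos_forall_mem_Icc_of_le_mul (by positivity) hG hρ_pos hρ_cross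
  obtain ⟨c, hc⟩ := exists_center_mul_sub_le (m := m) (M := M) hκ ha
  refine div_sub_div_integral_le h₁v h₂v h₁u h₂u hU₁ hU₂ (c := c) fun t => ?_
  by_cases ht : t ∈ G
  · have hk₂t := hk₂ t ht
    have hut := hu t ht
    have hfactor : U₂ * (k₁ t * v t) - U₁ * (k₂ t * v t)
        - c * (U₂ * (k₁ t * u t) - U₁ * (k₂ t * u t))
        = U₁ * (k₂ t * u t) * ((ρ t - 1) * (v t / u t - c)) := by
      simp only [ρ]
      field_simp
    calc _ = U₁ * (k₂ t * u t) * ((ρ t - 1) * (v t / u t - c)) := hfactor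
      _ ≤ U₁ * (k₂ t * u t) * ((κ - 1) / (κ + 1) * (M - m)) :=
          mul_le_mul_of_nonneg_left (hc _ (hρ t ht) _ (hr t ht)) (by positivity)
      _ = _ := by ring
  · simp [hk₁G t ht, hk₂G t ht]

end Integral

theorem stmt_11_general {S : Type*} [MeasurableSpace S]
    (lam : Measure S)
    (k : S → S → ℝ≥0) (hk : Measurable fun p : S × S => k p.1 p.2)
    (hkb : ∃ C : ℝ≥0∞, C < ⊤ ∧ ∀ s, ∫⁻ t, (k s t : ℝ≥0∞) ∂lam ≤ C)
    (F G : Set S)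
    (hG : 0 < lam G)
    (hpos : ∀ s ∈ F, ∀ t ∈ G, 0 < k s t)
    (hzero : ∀ s t, (s, t) ∉ F ×ˢ G → k s t = 0)
    (κ : ℝ) (hκ : 1 ≤ κ)
    (hcross : ∀ s₁ ∈ F, ∀ s₂ ∈ F, ∀ t₁ ∈ G, ∀ t₂ ∈ G,
      (k s₁ t₁ : ℝ) * (k s₂ t₂ : ℝ) ≤ κ ^ 2 * ((k s₂ t₁ : ℝ) * (k s₁ t₂ : ℝ)))
    (u v : S → ℝ) (hu : Measurable u) (hv : Measurable v)
    (hub : ∃ C : ℝ, ∀ t, |u t| ≤ C) (hvb : ∃ C : ℝ, ∀ t, |v t| ≤ C)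
    (hu0 : ∀ t, 0 ≤ u t) (hv0 : ∀ t, 0 ≤ v t)
    (huG : ∀ t ∈ G, 0 < u t)
    (hrat : ∃ C : ℝ, ∀ t ∈ G, v t / u t ≤ C) :
    oscOn (fun s => (∫ t, (k s t : ℝ) * v t ∂lam) / (∫ t, (k s t : ℝ) * u t ∂lam)) F ≤
      ((κ - 1) / (κ + 1)) * oscOn (fun t => v t / u t) G := by
  obtain ⟨C, hC, hCb⟩ := hkb
  obtain ⟨Cu, hCu⟩ := hub
  obtain ⟨Cv, hCv⟩ := hvb
  obtain ⟨Cr, hCr⟩ := hrat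
  have hGne : G.Nonempty := nonempty_of_measure_ne_zero hG.ne'
  have hk_int : ∀ s, Integrable (fun t => (k s t : ℝ)) lam := fun s =>
    ⟨(hk.comp (measurable_const.prodMk measurable_id)).coe_nnreal_real.aestronglyMeasurable,
      hasFiniteIntegral_iff_ofNNReal.2 ((hCb s).trans_lt hC)⟩
  have hku : ∀ s, Integrable (fun t => (k s t : ℝ) * u t) lam := fun s =>
    (hk_int s).mul_bdd hu.aestronglyMeasurable (ae_of_all _ hCu)
  have hkv : ∀ s, Integrable (fun t => (k s t : ℝ) * v t) lam := fun s =>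
    (hk_int s).mul_bdd hv.aestronglyMeasurable (ae_of_all _ hCv)
  have hU : ∀ s ∈ F, 0 < ∫ t, (k s t : ℝ) * u t ∂lam := fun s hs =>
    integral_pos_of_pos_on (fun t => mul_nonneg (k s t).coe_nonneg (hu0 t)) (hku s) hG
      fun t ht => mul_pos (hpos s hs t ht) (huG t ht)
  obtain ⟨m, M, hr, hMm⟩ := exists_bounds_sub_le_oscOn hGne
    ⟨Cr, by rintro _ ⟨t, ht, rfl⟩; exact hCr t ht⟩
    ⟨0, by rintro _ ⟨t, -, rfl⟩; exact div_nonneg (hv0 t) (hu0 t)⟩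
  obtain ⟨t₀, ht₀⟩ := hGne
  have hδ : 0 ≤ (κ - 1) / (κ + 1) := div_nonneg (by linarith) (by linarith)
  have hosc : 0 ≤ oscOn (fun t => v t / u t) G :=
    (sub_nonneg.2 ((hr t₀ ht₀).1.trans (hr t₀ ht₀).2)).trans hMm
  have hkG : ∀ s ∈ F, ∀ t ∉ G, (k s t : ℝ) = 0 := fun s hs t ht => by
    simp [hzero s t fun h => ht h.2]
  refine oscOn_le_of_forall_sub_le (mul_nonneg hδ hosc) fun s₁ hs₁ s₂ hs₂ => ?_
  refine (div_sub_div_integral_le_of_cross_ratio hκ ⟨t₀, ht₀⟩ (hpos s₁ hs₁) (hpos s₂ hs₂)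
    (hkG s₁ hs₁) (hkG s₂ hs₂) (hcross s₁ hs₁ s₂ hs₂) huG hr (hku s₁) (hku s₂) (hkv s₁) (hkv s₂)
    (hU s₁ hs₁) (hU s₂ hs₂)).trans ?_
  exact mul_le_mul_of_nonneg_left hMm hδ

/-- Hopf. If `k` is a density kernel with rectangular support `F × G`
whose cross-ratios are bounded by `κ²`, and `u, v ≥ 0` are bounded measurable with `u > 0`
on `G` and `v/u` bounded on `G`, then for `u₁(s) = ∫ k(s,t)u(t) λ(dt)`,
`v₁(s) = ∫ k(s,t)v(t) λ(dt)` one has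
`osc_F(v₁/u₁) ≤ ((κ−1)/(κ+1)) osc_G(v/u)`. -/
theorem stmt_11 {S : Type*} [MetricSpace S] [CompleteSpace S]
    [TopologicalSpace.SeparableSpace S] [MeasurableSpace S] [BorelSpace S]
    (lam : Measure S) [SigmaFinite lam]
    (k : S → S → ℝ≥0) (hk : Measurable fun p : S × S => k p.1 p.2)
    (hkb : ∃ C : ℝ≥0∞, C < ⊤ ∧ ∀ s, ∫⁻ t, (k s t : ℝ≥0∞) ∂lam ≤ C)
    (F G : Set S) (hFm : MeasurableSet F) (hGm : MeasurableSet G)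
    (hF : 0 < lam F) (hG : 0 < lam G)
    (hpos : ∀ s ∈ F, ∀ t ∈ G, 0 < k s t)
    (hzero : ∀ s t, (s, t) ∉ F ×ˢ G → k s t = 0)
    (κ : ℝ) (hκ : 1 ≤ κ)
    (hcross : ∀ s₁ ∈ F, ∀ s₂ ∈ F, ∀ t₁ ∈ G, ∀ t₂ ∈ G,
      (k s₁ t₁ : ℝ) * (k s₂ t₂ : ℝ) ≤ κ ^ 2 * ((k s₂ t₁ : ℝ) * (k s₁ t₂ : ℝ)))
    (u v : S → ℝ) (hu : Measurable u) (hv : Measurable v)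
    (hub : ∃ C : ℝ, ∀ t, |u t| ≤ C) (hvb : ∃ C : ℝ, ∀ t, |v t| ≤ C)
    (hu0 : ∀ t, 0 ≤ u t) (hv0 : ∀ t, 0 ≤ v t)
    (huG : ∀ t ∈ G, 0 < u t)
    (hrat : ∃ C : ℝ, ∀ t ∈ G, v t / u t ≤ C) :
    oscOn (fun s => (∫ t, (k s t : ℝ) * v t ∂lam) / (∫ t, (k s t : ℝ) * u t ∂lam)) F ≤
      ((κ - 1) / (κ + 1)) * oscOn (fun t => v t / u t) G :=
  stmt_11_general lam k hk hkb F G hG hpos hzero κ hκ hcross u v hu hv hub hvb hu0 hv0 huG hrat
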